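/- Let F be a finite field with q elements, let n ≥ 2, and let V = F^{n+1}. For every 2-dimensional linear subspace U ⊆ V and every 1-dimensional linear subspace L ⊆ V, one has (#{W : W is a 3-dimensional linear subspace of V with U ⊆ W}) · (#{W : W is a 3-dimensional linear subspace of V}) ≤ (#{W : W is a 3-dimensional linear subspace of V with L ⊆ W})². Equivalently, the probability ρ₂ that a uniformly random plane in ℙ^n contains a given line is at most the square of the probability ρ₁ = (q³−1)/(q^{n+1}−1) that it passes through a given point. -/
import Mathlib

open Module Submodule

theorem aux_card_quot {K V : Type*} [Field K] [AddCommGroup V] [Module K V]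
    [FiniteDimensional K V] (p : Submodule K V) (d : ℕ) :
    Nat.card {W : Submodule K V // finrank K W = d + finrank K p ∧ p ≤ W} =
      Nat.card {W' : Submodule K (V ⧸ p) // finrank K W' = d} := by
  have frc : ∀ W' : Submodule K (V ⧸ p),
      finrank K (comap p.mkQ W') = finrank K W' + finrank K p := by
    intro W'
    have hle : p ≤ comap p.mkQ W' := fun x hx => by
      have h0 : p.mkQ x = 0 := (Submodule.Quotient.mk_eq_zero p).2 hx
      simp [Submodule.mem_comap, h0]
    have h := LinearMap.finrank_range_add_finrank_ker (p.mkQ ∘ₗ (comap p.mkQ W').subtype)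
    have hr : LinearMap.range (p.mkQ ∘ₗ (comap p.mkQ W').subtype) = W' := by
      rw [LinearMap.range_comp, Submodule.range_subtype, Submodule.map_comap_eq,
        Submodule.range_mkQ, top_inf_eq]
    have hk : LinearMap.ker (p.mkQ ∘ₗ (comap p.mkQ W').subtype) =
        comap (comap p.mkQ W').subtype p := by
      rw [LinearMap.ker_comp, Submodule.ker_mkQ]
    rw [hr, hk] at h
    rw [← h, (Submodule.comapSubtypeEquivOfLe hle).finrank_eq]
  refine Nat.card_congr ((((Submodule.comapMkQRelIso p).toEquiv.subtypeEquiv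
    (fun W' => ?_)).trans ((Equiv.subtypeSubtypeEquivSubtypeInter _ _).trans
      (Equiv.subtypeEquivRight fun W => and_comm))).symm)
  show finrank K W' = d ↔ finrank K (comap p.mkQ W') = d + finrank K p
  rw [frc W']
  omega


attribute [local instance] Fintype.ofFinite in
theorem aux_card_count {K V : Type*} [Field K] [Fintype K] [AddCommGroup V] [Module K V]
    [Finite V] (k : ℕ) (hk : k ≤ finrank K V) :
    Nat.card {W : Submodule K V // finrank K W = k} *
        ∏ i : Fin k, (Fintype.card K ^ k - Fintype.card K ^ i.val) =
      ∏ i : Fin k, (Fintype.card K ^ finrank K V - Fintype.card K ^ i.val) := by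
  classical
  haveI : FiniteDimensional K V := Module.Finite.of_finite
  haveI : Finite (Submodule K V) :=
    Finite.of_injective (fun W : Submodule K V => (W : Set V)) SetLike.coe_injective
  set f : {s : Fin k → V // LinearIndependent K s} → {W : Submodule K V // finrank K W = k} :=
    fun s => ⟨span K (Set.range s.1), by
      rw [finrank_span_eq_card s.2, Fintype.card_fin]⟩ with hf
  have key : ∀ W : {W : Submodule K V // finrank K W = k},
      Nat.card {s // f s = W} =
        ∏ i : Fin k, (Fintype.card K ^ k - Fintype.card K ^ i.val) := by
    intro W
    have hW : finrank K W.1 = k := W.2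
    have hcl := card_linearIndependent (K := K) (V := W.1) (k := k) (le_of_eq hW.symm)
    rw [hW] at hcl
    rw [← hcl]
    refine Nat.card_congr ⟨fun x => ⟨fun i => ⟨x.1.1 i, ?_⟩, ?_⟩,
      fun t => ⟨⟨fun i => (t.1 i : V), t.2.map' W.1.subtype (Submodule.ker_subtype _)⟩, ?_⟩,
      fun x => Subtype.ext (Subtype.ext rfl), fun t => Subtype.ext (funext fun i => rfl)⟩
    · have hx : span K (Set.range x.1.1) = W.1 := congrArg Subtype.val x.2
      rw [← hx]
      exact subset_span ⟨i, rfl⟩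
    · exact LinearIndependent.of_comp W.1.subtype x.1.2
    · refine Subtype.ext ?_
      show span K (Set.range fun i => ((t.1 i : V))) = W.1
      have h1 : (Set.range fun i => ((t.1 i : V))) = W.1.subtype '' Set.range t.1 := by
        rw [← Set.range_comp]; rfl
      rw [h1, ← Submodule.map_span, t.2.span_eq_top_of_card_eq_finrank'
        (by rw [Fintype.card_fin, hW]), Submodule.map_top, Submodule.range_subtype]
  calc Nat.card {W : Submodule K V // finrank K W = k} *
        ∏ i : Fin k, (Fintype.card K ^ k - Fintype.card K ^ i.val)
      = ∑ W : {W : Submodule K V // finrank K W = k}, Nat.card {s // f s = W} := by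
        simp only [key, Finset.sum_const, smul_eq_mul, Finset.card_univ,
          Nat.card_eq_fintype_card]
    _ = Nat.card {s : Fin k → V // LinearIndependent K s} := by
        simp only [Nat.card_eq_fintype_card]
        rw [← Fintype.card_sigma]
        exact Fintype.card_congr (Equiv.sigmaFiberEquiv f)
    _ = _ := card_linearIndependent hk


theorem aux_int_key (q a : ℤ) (hq : 2 ≤ q) (ha : 1 ≤ a) :
    (a * q - 1) * ((a * q ^ 3 - 1) * (a * q ^ 3 - q) * (a * q ^ 3 - q ^ 2)) *
        ((q ^ 2 - 1) * (q ^ 2 - q)) ^ 2 ≤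
      ((a * q ^ 2 - 1) * (a * q ^ 2 - q)) ^ 2 *
        ((q - 1) * ((q ^ 3 - 1) * (q ^ 3 - q) * (q ^ 3 - q ^ 2))) := by
  have h1 : (0:ℤ) ≤ q - 1 := by linarith
  have h3 : (0:ℤ) ≤ a * q ^ 2 - 1 := by nlinarith
  have h4 : (0:ℤ) ≤ q ^ 2 - 1 := by nlinarith
  have hC : (0:ℤ) ≤ q ^ 5 * (a * q - 1) ^ 2 * (a * q ^ 2 - 1) * (q ^ 2 - 1) * (q - 1) ^ 2 := by
    have hq5 : (0:ℤ) ≤ q ^ 5 := by positivity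
    exact mul_nonneg (mul_nonneg (mul_nonneg (mul_nonneg hq5 (sq_nonneg _)) h3) h4) (sq_nonneg _)
  have key : (a * q ^ 3 - 1) * (q ^ 2 - 1) ≤ (a * q ^ 2 - 1) * (q ^ 3 - 1) := by
    nlinarith [mul_nonneg (mul_nonneg (sq_nonneg q) h1) (by linarith : (0:ℤ) ≤ a - 1)]
  calc (a * q - 1) * ((a * q ^ 3 - 1) * (a * q ^ 3 - q) * (a * q ^ 3 - q ^ 2)) *
        ((q ^ 2 - 1) * (q ^ 2 - q)) ^ 2
      = (q ^ 5 * (a * q - 1) ^ 2 * (a * q ^ 2 - 1) * (q ^ 2 - 1) * (q - 1) ^ 2) *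
          ((a * q ^ 3 - 1) * (q ^ 2 - 1)) := by ring
    _ ≤ (q ^ 5 * (a * q - 1) ^ 2 * (a * q ^ 2 - 1) * (q ^ 2 - 1) * (q - 1) ^ 2) *
          ((a * q ^ 2 - 1) * (q ^ 3 - 1)) := mul_le_mul_of_nonneg_left key hC
    _ = _ := by ring

theorem aux_nat_key (q m : ℕ) (hq : 2 ≤ q) :
    (q ^ (m + 1) - 1) * ((q ^ (m + 3) - 1) * (q ^ (m + 3) - q) * (q ^ (m + 3) - q ^ 2)) *
        ((q ^ 2 - 1) * (q ^ 2 - q)) ^ 2 ≤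
      ((q ^ (m + 2) - 1) * (q ^ (m + 2) - q)) ^ 2 *
        ((q - 1) * ((q ^ 3 - 1) * (q ^ 3 - q) * (q ^ 3 - q ^ 2))) := by
  have hq1 : 1 ≤ q := by omega
  have hp : ∀ i j : ℕ, i ≤ j → q ^ i ≤ q ^ j := fun i j h => Nat.pow_le_pow_right hq1 h
  have l1 : 1 ≤ q ^ (m + 1) := Nat.one_le_pow _ _ (by omega)
  have l2 : 1 ≤ q ^ (m + 3) := Nat.one_le_pow _ _ (by omega)
  have l3 : q ≤ q ^ (m + 3) := by simpa using hp 1 (m + 3) (by omega)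
  have l4 : q ^ 2 ≤ q ^ (m + 3) := hp 2 (m + 3) (by omega)
  have l5 : 1 ≤ q ^ 2 := Nat.one_le_pow _ _ (by omega)
  have l6 : q ≤ q ^ 2 := by simpa using hp 1 2 (by omega)
  have l7 : 1 ≤ q ^ (m + 2) := Nat.one_le_pow _ _ (by omega)
  have l8 : q ≤ q ^ (m + 2) := by simpa using hp 1 (m + 2) (by omega)
  have l9 : 1 ≤ q ^ 3 := Nat.one_le_pow _ _ (by omega)
  have l10 : q ≤ q ^ 3 := by simpa using hp 1 3 (by omega)
  have l11 : q ^ 2 ≤ q ^ 3 := hp 2 3 (by omega)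
  zify [l1, l2, l3, l4, l5, l6, l7, l8, l9, l10, l11, hq1]
  have ha : (1:ℤ) ≤ (q:ℤ) ^ m := one_le_pow₀ (by exact_mod_cast hq1)
  have hq' : (2:ℤ) ≤ (q:ℤ) := by exact_mod_cast hq
  have h := aux_int_key (q:ℤ) ((q:ℤ) ^ m) hq' ha
  calc ((q:ℤ) ^ (m + 1) - 1) * (((q:ℤ) ^ (m + 3) - 1) * ((q:ℤ) ^ (m + 3) - q) *
          ((q:ℤ) ^ (m + 3) - (q:ℤ) ^ 2)) * (((q:ℤ) ^ 2 - 1) * ((q:ℤ) ^ 2 - q)) ^ 2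
      = ((q:ℤ) ^ m * q - 1) * (((q:ℤ) ^ m * q ^ 3 - 1) * ((q:ℤ) ^ m * q ^ 3 - q) *
          ((q:ℤ) ^ m * q ^ 3 - (q:ℤ) ^ 2)) * (((q:ℤ) ^ 2 - 1) * ((q:ℤ) ^ 2 - q)) ^ 2 := by
        rw [pow_add, pow_add]; ring
    _ ≤ (((q:ℤ) ^ m * q ^ 2 - 1) * ((q:ℤ) ^ m * q ^ 2 - q)) ^ 2 *
          (((q:ℤ) - 1) * (((q:ℤ) ^ 3 - 1) * ((q:ℤ) ^ 3 - q) * ((q:ℤ) ^ 3 - (q:ℤ) ^ 2))) := h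
    _ = _ := by rw [pow_add]; try ring

/-- For `V = F^(n+1)` over a finite field `F`, a `2`-dimensional subspace `U ⊆ V` and a
`1`-dimensional subspace `L ⊆ V`, the number of `3`-dimensional subspaces containing `U`
times the total number of `3`-dimensional subspaces is at most the square of the number
of `3`-dimensional subspaces containing `L`; i.e. `ρ₂ ≤ ρ₁²` for a random plane in
`ℙⁿ`. -/
theorem rho_two_le_rho_one_sq (F : Type) [Field F] [Fintype F] (n : ℕ) (hn : 2 ≤ n)
    (U L : Submodule F (Fin (n + 1) → F))
    (hU : Module.finrank F U = 2) (hL : Module.finrank F L = 1) :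
    Nat.card {W : Submodule F (Fin (n + 1) → F) // Module.finrank F W = 3 ∧ U ≤ W} *
        Nat.card {W : Submodule F (Fin (n + 1) → F) // Module.finrank F W = 3} ≤
      (Nat.card {W : Submodule F (Fin (n + 1) → F) //
        Module.finrank F W = 3 ∧ L ≤ W}) ^ 2 := by
  obtain ⟨m, rfl⟩ : ∃ m, n = m + 2 := ⟨n - 2, by omega⟩
  have hq : 2 ≤ Fintype.card F := Fintype.one_lt_card
  have hfr : finrank F (Fin (m + 2 + 1) → F) = m + 3 := by
    rw [Module.finrank_fin_fun]
  haveI : Finite ((Fin (m + 2 + 1) → F) ⧸ U) := Quotient.finite _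
  haveI : Finite ((Fin (m + 2 + 1) → F) ⧸ L) := Quotient.finite _
  have qU : finrank F ((Fin (m + 2 + 1) → F) ⧸ U) = m + 1 := by
    have h := Submodule.finrank_quotient_add_finrank U
    rw [hU, hfr] at h
    omega
  have qL : finrank F ((Fin (m + 2 + 1) → F) ⧸ L) = m + 2 := by
    have h := Submodule.finrank_quotient_add_finrank L
    rw [hL, hfr] at h
    omega
  have h1 : Nat.card {W : Submodule F (Fin (m + 2 + 1) → F) // finrank F W = 3 ∧ U ≤ W} =
      Nat.card {W' : Submodule F ((Fin (m + 2 + 1) → F) ⧸ U) // finrank F W' = 1} := by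
    have h := aux_card_quot U 1
    rw [hU, show 1 + 2 = 3 from rfl] at h
    exact h
  have h2 : Nat.card {W : Submodule F (Fin (m + 2 + 1) → F) // finrank F W = 3 ∧ L ≤ W} =
      Nat.card {W' : Submodule F ((Fin (m + 2 + 1) → F) ⧸ L) // finrank F W' = 2} := by
    have h := aux_card_quot L 2
    rw [hL, show 2 + 1 = 3 from rfl] at h
    exact h
  rw [h1, h2]
  set q := Fintype.card F with hq'
  set A := Nat.card {W' : Submodule F ((Fin (m + 2 + 1) → F) ⧸ U) // finrank F W' = 1} with hA
  set B := Nat.card {W : Submodule F (Fin (m + 2 + 1) → F) // finrank F W = 3} with hB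
  set C := Nat.card {W' : Submodule F ((Fin (m + 2 + 1) → F) ⧸ L) // finrank F W' = 2} with hC
  have eU : A * (q - 1) = q ^ (m + 1) - 1 := by
    have h := aux_card_count (K := F) (V := (Fin (m + 2 + 1) → F) ⧸ U) 1 (by omega)
    rw [qU] at h
    simp only [Fin.prod_univ_one, Fin.val_zero, pow_zero, pow_one] at h
    exact h
  have eL : C * ((q ^ 2 - 1) * (q ^ 2 - q)) = (q ^ (m + 2) - 1) * (q ^ (m + 2) - q) := by
    have h := aux_card_count (K := F) (V := (Fin (m + 2 + 1) → F) ⧸ L) 2 (by omega)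
    rw [qL] at h
    simp only [Fin.prod_univ_two, Fin.val_zero, Fin.val_one, pow_zero, pow_one] at h
    exact h
  have eT : B * ((q ^ 3 - 1) * (q ^ 3 - q) * (q ^ 3 - q ^ 2)) =
      (q ^ (m + 3) - 1) * (q ^ (m + 3) - q) * (q ^ (m + 3) - q ^ 2) := by
    have h := aux_card_count (K := F) (V := Fin (m + 2 + 1) → F) 3 (by omega)
    rw [hfr] at h
    simp only [Fin.prod_univ_three, Fin.val_zero, Fin.val_one, Fin.val_two,
      pow_zero, pow_one] at h
    exact h
  have pos : ∀ i j : ℕ, i < j → 0 < q ^ j - q ^ i := fun i j h =>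
    Nat.sub_pos_of_lt (Nat.pow_lt_pow_right hq h)
  have p1 : 0 < q - 1 := by omega
  have p2 : 0 < q ^ 3 - 1 := by simpa using pos 0 3 (by omega)
  have p3 : 0 < q ^ 3 - q := by simpa using pos 1 3 (by omega)
  have p4 : 0 < q ^ 3 - q ^ 2 := pos 2 3 (by omega)
  have p5 : 0 < q ^ 2 - 1 := by simpa using pos 0 2 (by omega)
  have p6 : 0 < q ^ 2 - q := by simpa using pos 1 2 (by omega)
  have hD : 0 < (q - 1) * ((q ^ 3 - 1) * (q ^ 3 - q) * (q ^ 3 - q ^ 2)) *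
      ((q ^ 2 - 1) * (q ^ 2 - q)) ^ 2 :=
    Nat.mul_pos (Nat.mul_pos p1 (Nat.mul_pos (Nat.mul_pos p2 p3) p4))
      (pow_pos (Nat.mul_pos p5 p6) 2)
  refine Nat.le_of_mul_le_mul_left ?_ hD
  calc (q - 1) * ((q ^ 3 - 1) * (q ^ 3 - q) * (q ^ 3 - q ^ 2)) *
        ((q ^ 2 - 1) * (q ^ 2 - q)) ^ 2 * (A * B)
      = (A * (q - 1)) * (B * ((q ^ 3 - 1) * (q ^ 3 - q) * (q ^ 3 - q ^ 2))) *
          ((q ^ 2 - 1) * (q ^ 2 - q)) ^ 2 := by ring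
    _ = (q ^ (m + 1) - 1) * ((q ^ (m + 3) - 1) * (q ^ (m + 3) - q) * (q ^ (m + 3) - q ^ 2)) *
          ((q ^ 2 - 1) * (q ^ 2 - q)) ^ 2 := by rw [eU, eT]
    _ ≤ ((q ^ (m + 2) - 1) * (q ^ (m + 2) - q)) ^ 2 *
          ((q - 1) * ((q ^ 3 - 1) * (q ^ 3 - q) * (q ^ 3 - q ^ 2))) := aux_nat_key q m hq
    _ = (C * ((q ^ 2 - 1) * (q ^ 2 - q))) ^ 2 *
          ((q - 1) * ((q ^ 3 - 1) * (q ^ 3 - q) * (q ^ 3 - q ^ 2))) := by rw [eL]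
    _ = (q - 1) * ((q ^ 3 - 1) * (q ^ 3 - q) * (q ^ 3 - q ^ 2)) *
          ((q ^ 2 - 1) * (q ^ 2 - q)) ^ 2 * C ^ 2 := by ring
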